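/- arXiv:1710.05236 — 3 statements merged into one kernel-verified Lean document; each statement's English description precedes it below -/
import Mathlib

section
/- Every maximal solution φ of the ODE φ'(x) = 2(1+φ(x)²) - (1/r)(1+φ(x)²)^{3/2} with φ(0) = 0, where r > 1, satisfies 0 ≤ φ(x) ≤ √(4r²-1) for all x > 0 in its domain. -/
/-!
The right-hand side `g(y) = (1 + y²)(2 - √(1 + y²)/r)` is `C¹`, vanishes at `y = ±√(4r² - 1)`
and is positive strictly between these two equilibria. By uniqueness of solutions, a solution
starting at `0` can never reach an equilibrium, so by the intermediate value theorem it stays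
strictly between them; there `φ' = g(φ) > 0`, so `φ` increases from `φ(0) = 0`.
-/

open Set

section Autonomous

theorem ne_of_hasDerivAt_comp_of_eq_zero {E : Type*} [NormedAddCommGroup E] [NormedSpace ℝ E]
    {g : E → E} (hg : LocallyLipschitz g) {φ : ℝ → E} {t₀ t₁ : ℝ} {c : E}
    (hle : t₀ ≤ t₁) (hφ : ∀ t ∈ Icc t₀ t₁, HasDerivAt φ (g (φ t)) t) (hc : g c = 0)
    (h₀ : φ t₀ ≠ c) : φ t₁ ≠ c := by
  intro h₁
  have hcont : ContinuousOn φ (Icc t₀ t₁) := fun t ht ↦ (hφ t ht).continuousAt.continuousWithinAt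
  set s := φ '' Icc t₀ t₁
  obtain ⟨K, hK⟩ := (hg.locallyLipschitzOn (s := s)).exists_lipschitzOnWith_of_compact
    (isCompact_Icc.image_of_continuousOn hcont)
  have hcs : c ∈ s := ⟨t₁, right_mem_Icc.2 hle, h₁⟩
  have heq := ODE_solution_unique_of_mem_Icc_left (v := fun _ ↦ g) (s := fun _ ↦ s)
    (fun _ _ ↦ hK) hcont (fun t ht ↦ (hφ t (Ioc_subset_Icc_self ht)).hasDerivWithinAt)
    (fun t ht ↦ mem_image_of_mem φ (Ioc_subset_Icc_self ht)) continuousOn_const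
    (fun t _ ↦ hc ▸ hasDerivWithinAt_const t _ c) (fun _ _ ↦ hcs) h₁
  exact h₀ (heq (left_mem_Icc.2 hle))

variable {g φ : ℝ → ℝ} {t₀ t₁ lo hi : ℝ}

theorem mem_Ioo_of_hasDerivAt_comp_of_eq_zero (hg : LocallyLipschitz g) (hle : t₀ ≤ t₁)
    (hφ : ∀ t ∈ Icc t₀ t₁, HasDerivAt φ (g (φ t)) t) (hlo : g lo = 0) (hhi : g hi = 0)
    (h₀ : φ t₀ ∈ Ioo lo hi) : φ t₁ ∈ Ioo lo hi := by
  have hcont : ContinuousOn φ (Icc t₀ t₁) := fun t ht ↦ (hφ t ht).continuousAt.continuousWithinAt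
  have avoid {c : ℝ} (hc : g c = 0) (hc₀ : φ t₀ ≠ c) : ∀ t ∈ Icc t₀ t₁, φ t ≠ c :=
    fun t ht ↦ ne_of_hasDerivAt_comp_of_eq_zero hg ht.1
      (fun s hs ↦ hφ s ⟨hs.1, hs.2.trans ht.2⟩) hc hc₀
  constructor
  · by_contra! h
    obtain ⟨t, ht, hφt⟩ := intermediate_value_Icc' hle hcont ⟨h, h₀.1.le⟩
    exact avoid hlo h₀.1.ne' t ht hφt
  · by_contra! h
    obtain ⟨t, ht, hφt⟩ := intermediate_value_Icc hle hcont ⟨h₀.2.le, h⟩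
    exact avoid hhi h₀.2.ne t ht hφt

theorem monotoneOn_of_hasDerivAt_comp_of_eq_zero (hg : LocallyLipschitz g)
    (hφ : ∀ t ∈ Icc t₀ t₁, HasDerivAt φ (g (φ t)) t) (hlo : g lo = 0) (hhi : g hi = 0)
    (hnonneg : ∀ y ∈ Ioo lo hi, 0 ≤ g y) (h₀ : φ t₀ ∈ Ioo lo hi) : MonotoneOn φ (Icc t₀ t₁) := by
  refine monotoneOn_of_hasDerivWithinAt_nonneg (convex_Icc t₀ t₁)
    (fun t ht ↦ (hφ t ht).continuousAt.continuousWithinAt)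
    (fun t ht ↦ (hφ t (interior_subset ht)).hasDerivWithinAt) fun t ht ↦ hnonneg _ ?_
  have ht : t ∈ Icc t₀ t₁ := interior_subset ht
  exact mem_Ioo_of_hasDerivAt_comp_of_eq_zero hg ht.1
    (fun s hs ↦ hφ s ⟨hs.1, hs.2.trans ht.2⟩) hlo hhi h₀

end Autonomous

noncomputable def odeRhs (r y : ℝ) : ℝ := 2 * (1 + y ^ 2) - (1 / r) * (1 + y ^ 2) ^ ((3 : ℝ) / 2)

theorem odeRhs_eq_mul (r y : ℝ) : odeRhs r y = (1 + y ^ 2) * (2 - √(1 + y ^ 2) / r) := by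
  have hpow : (1 + y ^ 2) ^ ((3 : ℝ) / 2) = (1 + y ^ 2) * √(1 + y ^ 2) := by
    rw [show (3 : ℝ) / 2 = 1 + 1 / 2 by norm_num, Real.rpow_add (by positivity), Real.rpow_one,
      ← Real.sqrt_eq_rpow]
  rw [odeRhs, hpow]
  ring

theorem contDiff_odeRhs (r : ℝ) : ContDiff ℝ 1 (odeRhs r) := by
  have hpow : ContDiff ℝ 1 fun y : ℝ ↦ y ^ ((3 : ℝ) / 2) :=
    Real.contDiff_rpow_const_of_le (by norm_num)
  unfold odeRhs
  fun_prop

theorem odeRhs_eq_zero {r y : ℝ} (hr : 0 < r) (hy : 1 + y ^ 2 = 4 * r ^ 2) : odeRhs r y = 0 := by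
  have hsqrt : √(4 * r ^ 2) = 2 * r := by
    rw [show 4 * r ^ 2 = (2 * r) ^ 2 by ring, Real.sqrt_sq (by positivity)]
  rw [odeRhs_eq_mul, hy, hsqrt]
  field_simp
  ring

theorem odeRhs_pos {r y : ℝ} (hr : 0 < r) (hy : 1 + y ^ 2 < 4 * r ^ 2) : 0 < odeRhs r y := by
  have hsqrt : √(1 + y ^ 2) < 2 * r := by
    rw [Real.sqrt_lt' (by positivity)]
    linarith
  rw [odeRhs_eq_mul]
  have : 0 < 2 - √(1 + y ^ 2) / r := by
    rw [sub_pos, div_lt_iff₀ hr]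
    linarith
  positivity

theorem stmt9_general (r : ℝ) (hr : 1 < r) (a b : ℝ) (ha : a < 0)
    (φ : ℝ → ℝ)
    (hode : ∀ x ∈ Set.Ioo a b,
      HasDerivAt φ (2 * (1 + (φ x) ^ 2) - (1 / r) * (1 + (φ x) ^ 2) ^ ((3 : ℝ) / 2)) x)
    (hinit : φ 0 = 0) :
    ∀ x ∈ Set.Ioo a b, 0 < x → 0 ≤ φ x ∧ φ x ≤ Real.sqrt (4 * r ^ 2 - 1) := by
  intro x hx hx₀
  set M := √(4 * r ^ 2 - 1)
  have hr₀ : 0 < r := one_pos.trans hr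
  have hM : 1 + M ^ 2 = 4 * r ^ 2 := by rw [Real.sq_sqrt (by nlinarith)]; ring
  have hM₀ : 0 < M := Real.sqrt_pos.2 (by nlinarith)
  have hg := (contDiff_odeRhs r).locallyLipschitz
  have hφ : ∀ t ∈ Icc 0 x, HasDerivAt φ (odeRhs r (φ t)) t :=
    fun t ht ↦ hode t ⟨ha.trans_le ht.1, ht.2.trans_lt hx.2⟩
  have hlo : odeRhs r (-M) = 0 := odeRhs_eq_zero hr₀ (by rw [neg_sq, hM])
  have hhi : odeRhs r M = 0 := odeRhs_eq_zero hr₀ hM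
  have h₀ : φ 0 ∈ Ioo (-M) M := by
    rw [hinit]; exact ⟨neg_lt_zero.2 hM₀, hM₀⟩
  have hnonneg : ∀ y ∈ Ioo (-M) M, 0 ≤ odeRhs r y := fun y hy ↦
    (odeRhs_pos hr₀ (by nlinarith [sq_lt_sq' hy.1 hy.2])).le
  refine ⟨?_, (mem_Ioo_of_hasDerivAt_comp_of_eq_zero hg hx₀.le hφ hlo hhi h₀).2.le⟩
  simpa [hinit] using monotoneOn_of_hasDerivAt_comp_of_eq_zero hg hφ hlo hhi hnonneg h₀
    (left_mem_Icc.2 hx₀.le) (right_mem_Icc.2 hx₀.le) hx₀.le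

theorem stmt9 (r : ℝ) (hr : 1 < r) (a b : ℝ) (ha : a < 0) (hb : 0 < b)
    (φ : ℝ → ℝ)
    (hode : ∀ x ∈ Set.Ioo a b,
      HasDerivAt φ (2 * (1 + (φ x) ^ 2) - (1 / r) * (1 + (φ x) ^ 2) ^ ((3 : ℝ) / 2)) x)
    (hinit : φ 0 = 0) :
    ∀ x ∈ Set.Ioo a b, 0 < x → 0 ≤ φ x ∧ φ x ≤ Real.sqrt (4 * r ^ 2 - 1) :=
  stmt9_general r hr a b ha φ hode hinit
end

section
/- The solution φ of the Cauchy problem φ' = 2(1+φ²) - (1/r)(1+φ²)^{3/2}, φ(0) = 0 with r > 1 is defined on all of ℝ, is odd, and is monotone nondecreasing. -/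
/-!
Separation of variables. For `r > 1/2` the right-hand side `g y = (1 + y²)(2 - √(1 + y²)/r)` is
even, continuous and positive on `(-a, a)`, `a = √(4r² - 1)`, and vanishes only linearly at `±a`:
`g y ≤ 4a(a - y)` for `0 ≤ y < a`. So `1/g` is not integrable at `±a`, and the travel time
`T u = ∫₀ᵘ dy / g y` is an odd increasing bijection from `(-a, a)` onto `ℝ`; its inverse is the
global solution, odd and monotone with `φ 0 = 0`.
-/

open Real Set Function Filter

theorem integral_inv_mul_sub {b u : ℝ} (C : ℝ) (hu : u ∈ Ico 0 b) :
    ∫ y in (0 : ℝ)..u, (C * (b - y))⁻¹ = C⁻¹ * log (b / (b - u)) := by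
  have hb : 0 ∉ uIcc (b - u) b := by
    rw [uIcc_of_le (by linarith [hu.1])]
    exact fun h => by linarith [h.1, hu.2]
  simp only [mul_inv, intervalIntegral.integral_const_mul,
    intervalIntegral.integral_comp_sub_left (fun y => y⁻¹), sub_zero, integral_inv hb]

namespace SeparableODE

variable {g : ℝ → ℝ} {a b u : ℝ}

noncomputable def travelTime (g : ℝ → ℝ) (u : ℝ) : ℝ := ∫ y in (0 : ℝ)..u, (g y)⁻¹

theorem travelTime_zero : travelTime g 0 = 0 := intervalIntegral.integral_same

theorem travelTime_neg (heven : ∀ y, g (-y) = g y) (u : ℝ) :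
    travelTime g (-u) = -travelTime g u := by
  have h := intervalIntegral.integral_comp_neg (a := u) (b := 0) fun y => (g y)⁻¹
  simp only [heven, neg_zero] at h
  rw [travelTime, travelTime, ← h, intervalIntegral.integral_symm]

theorem hasDerivAt_travelTime (hg : ContinuousOn g (Ioo a b)) (hpos : ∀ y ∈ Ioo a b, 0 < g y)
    (h0 : 0 ∈ Ioo a b) (hu : u ∈ Ioo a b) : HasDerivAt (travelTime g) (g u)⁻¹ u :=
  have hinv := hg.inv₀ fun y hy => (hpos y hy).ne'
  intervalIntegral.integral_hasDerivAt_right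
    ((hinv.mono (ordConnected_Ioo.uIcc_subset h0 hu)).intervalIntegrable)
    (hinv.stronglyMeasurableAtFilter isOpen_Ioo u hu)
    (hinv.continuousAt (isOpen_Ioo.mem_nhds hu))

theorem strictMonoOn_travelTime (hg : ContinuousOn g (Ioo a b)) (hpos : ∀ y ∈ Ioo a b, 0 < g y)
    (h0 : 0 ∈ Ioo a b) : StrictMonoOn (travelTime g) (Ioo a b) := by
  refine strictMonoOn_of_deriv_pos (convex_Ioo a b)
    (fun u hu => (hasDerivAt_travelTime hg hpos h0 hu).continuousAt.continuousWithinAt) ?_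
  intro u hu
  rw [interior_Ioo] at hu
  rw [(hasDerivAt_travelTime hg hpos h0 hu).deriv]
  exact inv_pos.2 (hpos u hu)

theorem not_bddAbove_travelTime (hg : ContinuousOn g (Ioo a b)) (hpos : ∀ y ∈ Ioo a b, 0 < g y)
    (h0 : 0 ∈ Ioo a b) {C : ℝ} (hC : 0 < C) (hle : ∀ y ∈ Ico 0 b, g y ≤ C * (b - y)) :
    ¬BddAbove (travelTime g '' Ioo a b) := by
  rw [not_bddAbove_iff]
  intro M
  set ε := exp (-(C * (|M| + 1)))
  have hε : ε < 1 := exp_lt_one_iff.2 (by nlinarith [abs_nonneg M])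
  have hb : 0 < b := h0.2
  set u := b - b * ε
  have hu : u ∈ Ico 0 b := ⟨by nlinarith, by nlinarith [exp_pos (-(C * (|M| + 1)))]⟩
  have huab : Icc 0 u ⊆ Ioo a b := fun y hy => ⟨h0.1.trans_le hy.1, hy.2.trans_lt hu.2⟩
  refine ⟨travelTime g u, mem_image_of_mem _ (huab ⟨hu.1, le_rfl⟩), ?_⟩
  calc M < |M| + 1 := by linarith [le_abs_self M]
    _ = C⁻¹ * log (b / (b - u)) := by
      rw [show b - u = b * ε by ring, div_mul_cancel_left₀ hb.ne', log_inv, log_exp]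
      field_simp
    _ = ∫ y in (0 : ℝ)..u, (C * (b - y))⁻¹ := (integral_inv_mul_sub C hu).symm
    _ ≤ travelTime g u := by
      refine intervalIntegral.integral_mono_on hu.1 ?_ ?_ fun y hy => ?_
      · refine ContinuousOn.intervalIntegrable (ContinuousOn.inv₀ (by fun_prop) fun y hy => ?_)
        rw [uIcc_of_le hu.1] at hy
        exact mul_ne_zero hC.ne' (by linarith [hy.2, hu.2])
      · exact ((hg.inv₀ fun y hy => (hpos y hy).ne').mono huab).intervalIntegrable_of_Icc hu.1
      · exact inv_anti₀ (hpos y (huab hy)) (hle y ⟨hy.1, hy.2.trans_lt hu.2⟩)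

theorem surjOn_travelTime (hg : ContinuousOn g (Ioo a b)) (hpos : ∀ y ∈ Ioo a b, 0 < g y)
    (h0 : 0 ∈ Ioo a b) (hbot : ¬BddBelow (travelTime g '' Ioo a b))
    (htop : ¬BddAbove (travelTime g '' Ioo a b)) : SurjOn (travelTime g) (Ioo a b) univ :=
  ((isPreconnected_Ioo.image _ fun _ hu =>
    (hasDerivAt_travelTime hg hpos h0 hu).continuousAt.continuousWithinAt).eq_univ_of_unbounded
    hbot htop).ge

noncomputable def separableSolution (g : ℝ → ℝ) (a b : ℝ) : ℝ → ℝ :=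
  invFunOn (travelTime g) (Ioo a b)

theorem separableSolution_mem (hsurj : SurjOn (travelTime g) (Ioo a b) univ) (x : ℝ) :
    separableSolution g a b x ∈ Ioo a b :=
  hsurj.mapsTo_invFunOn (mem_univ x)

theorem travelTime_separableSolution (hsurj : SurjOn (travelTime g) (Ioo a b) univ) (x : ℝ) :
    travelTime g (separableSolution g a b x) = x :=
  hsurj.rightInvOn_invFunOn (mem_univ x)

theorem separableSolution_travelTime (hg : ContinuousOn g (Ioo a b))
    (hpos : ∀ y ∈ Ioo a b, 0 < g y) (h0 : 0 ∈ Ioo a b) (hu : u ∈ Ioo a b) :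
    separableSolution g a b (travelTime g u) = u :=
  (strictMonoOn_travelTime hg hpos h0).injOn.leftInvOn_invFunOn hu

theorem separableSolution_zero (hg : ContinuousOn g (Ioo a b)) (hpos : ∀ y ∈ Ioo a b, 0 < g y)
    (h0 : 0 ∈ Ioo a b) : separableSolution g a b 0 = 0 := by
  simpa only [travelTime_zero] using separableSolution_travelTime hg hpos h0 h0

theorem monotone_separableSolution (hg : ContinuousOn g (Ioo a b))
    (hpos : ∀ y ∈ Ioo a b, 0 < g y) (h0 : 0 ∈ Ioo a b)
    (hsurj : SurjOn (travelTime g) (Ioo a b) univ) : Monotone (separableSolution g a b) := by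
  intro x y hxy
  rwa [← (strictMonoOn_travelTime hg hpos h0).le_iff_le (separableSolution_mem hsurj x)
    (separableSolution_mem hsurj y), travelTime_separableSolution hsurj,
    travelTime_separableSolution hsurj]

theorem range_separableSolution (hg : ContinuousOn g (Ioo a b)) (hpos : ∀ y ∈ Ioo a b, 0 < g y)
    (h0 : 0 ∈ Ioo a b) (hsurj : SurjOn (travelTime g) (Ioo a b) univ) :
    range (separableSolution g a b) = Ioo a b :=
  (range_subset_iff.2 (separableSolution_mem hsurj)).antisymm fun u hu =>
    ⟨travelTime g u, separableSolution_travelTime hg hpos h0 hu⟩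

theorem continuous_separableSolution (hg : ContinuousOn g (Ioo a b))
    (hpos : ∀ y ∈ Ioo a b, 0 < g y) (h0 : 0 ∈ Ioo a b)
    (hsurj : SurjOn (travelTime g) (Ioo a b) univ) : Continuous (separableSolution g a b) := by
  refine continuous_iff_continuousAt.2 fun x => continuousAt_of_monotoneOn_of_image_mem_nhds
    ((monotone_separableSolution hg hpos h0 hsurj).monotoneOn univ) univ_mem ?_
  rw [image_univ, range_separableSolution hg hpos h0 hsurj]
  exact isOpen_Ioo.mem_nhds (separableSolution_mem hsurj x)

theorem hasDerivAt_separableSolution (hg : ContinuousOn g (Ioo a b))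
    (hpos : ∀ y ∈ Ioo a b, 0 < g y) (h0 : 0 ∈ Ioo a b)
    (hsurj : SurjOn (travelTime g) (Ioo a b) univ) (x : ℝ) :
    HasDerivAt (separableSolution g a b) (g (separableSolution g a b x)) x := by
  have hmem := separableSolution_mem hsurj x
  simpa only [inv_inv] using HasDerivAt.of_local_left_inverse
    (continuous_separableSolution hg hpos h0 hsurj).continuousAt
    (hasDerivAt_travelTime hg hpos h0 hmem) (inv_pos.2 (hpos _ hmem)).ne'
    (.of_forall (travelTime_separableSolution hsurj))

theorem separableSolution_neg (hg : ContinuousOn g (Ioo (-b) b))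
    (hpos : ∀ y ∈ Ioo (-b) b, 0 < g y) (h0 : 0 ∈ Ioo (-b) b) (heven : ∀ y, g (-y) = g y)
    (hsurj : SurjOn (travelTime g) (Ioo (-b) b) univ) (x : ℝ) :
    separableSolution g (-b) b (-x) = -separableSolution g (-b) b x := by
  have hmem := separableSolution_mem hsurj x
  conv_lhs => rw [← travelTime_separableSolution hsurj x, ← travelTime_neg heven]
  exact separableSolution_travelTime hg hpos h0 ⟨neg_lt_neg hmem.2, by linarith [hmem.1]⟩

theorem not_bddBelow_travelTime_of_even (heven : ∀ y, g (-y) = g y)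
    (htop : ¬BddAbove (travelTime g '' Ioo (-b) b)) : ¬BddBelow (travelTime g '' Ioo (-b) b) := by
  rw [not_bddAbove_iff] at htop
  rw [not_bddBelow_iff]
  intro M
  obtain ⟨_, ⟨u, hu, rfl⟩, hMu⟩ := htop (-M)
  exact ⟨_, ⟨-u, ⟨neg_lt_neg hu.2, by linarith [hu.1]⟩, rfl⟩, by
    rw [travelTime_neg heven]; linarith⟩

end SeparableODE

open SeparableODE

section

noncomputable def odeField (r y : ℝ) : ℝ :=
  2 * (1 + y ^ 2) - (1 / r) * (1 + y ^ 2) ^ ((3 : ℝ) / 2)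

noncomputable def equilibrium (r : ℝ) : ℝ := √(4 * r ^ 2 - 1)

variable {r y : ℝ}

theorem odeField_eq (r y : ℝ) : odeField r y = (1 + y ^ 2) * (2 - √(1 + y ^ 2) / r) := by
  rw [odeField, show (3 : ℝ) / 2 = 1 + 1 / 2 by norm_num, rpow_add (by positivity), rpow_one,
    ← sqrt_eq_rpow]
  ring

theorem odeField_neg (r y : ℝ) : odeField r (-y) = odeField r y := by
  simp only [odeField, even_two.neg_pow]

theorem continuous_odeField (r : ℝ) : Continuous (odeField r) := by
  unfold odeField
  exact continuous_const.mul (by fun_prop) |>.sub <| continuous_const.mul <|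
    (by fun_prop : Continuous fun y : ℝ => 1 + y ^ 2).rpow_const fun _ => Or.inr (by norm_num)

theorem sqrt_one_add_sq_lt (hr : 0 ≤ r) (hy : y ∈ Ioo (-equilibrium r) (equilibrium r)) :
    √(1 + y ^ 2) < 2 * r := by
  have := (lt_sqrt (abs_nonneg y)).1 (abs_lt.2 hy)
  rw [sq_abs] at this
  rw [sqrt_lt (by positivity) (by positivity)]
  linarith

theorem odeField_pos (hr : 0 < r) :
    ∀ y ∈ Ioo (-equilibrium r) (equilibrium r), 0 < odeField r y := by
  intro y hy
  have hs := sqrt_one_add_sq_lt hr.le hy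
  rw [odeField_eq]
  have : √(1 + y ^ 2) / r < 2 := by rw [div_lt_iff₀ hr]; linarith
  have : (0 : ℝ) < 1 + y ^ 2 := by positivity
  nlinarith

theorem odeField_le (hr : 0 < r) (hy : y ∈ Ico 0 (equilibrium r)) :
    odeField r y ≤ 4 * equilibrium r * (equilibrium r - y) := by
  set a := equilibrium r
  set s := √(1 + y ^ 2)
  have ha : 0 < a := hy.1.trans_lt hy.2
  have ha2 : a ^ 2 = 4 * r ^ 2 - 1 := sq_sqrt (sqrt_pos.1 ha).le
  have hs2 : s ^ 2 = 1 + y ^ 2 := sq_sqrt (by positivity)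
  have hs : s < 2 * r := sqrt_one_add_sq_lt hr.le ⟨by linarith [hy.1], hy.2⟩
  have hfactor : (2 * r - s) * (2 * r + s) = (a - y) * (a + y) := by nlinarith
  have hs0 : 0 ≤ s := sqrt_nonneg _
  have hay : 0 ≤ a - y := by linarith [hy.2]
  rw [odeField_eq, show (1 + y ^ 2) * (2 - s / r) = s ^ 2 * (2 * r - s) / r by
      rw [hs2]; field_simp,
    div_le_iff₀ hr]
  refine le_of_mul_le_mul_right ?_ (by linarith : 0 < 2 * r + s)
  calc s ^ 2 * (2 * r - s) * (2 * r + s) = s ^ 2 * ((a - y) * (a + y)) := by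
        rw [mul_assoc, hfactor]
    _ ≤ (2 * r) ^ 2 * ((a - y) * (2 * a)) := by
        gcongr
        · exact mul_nonneg hay (by linarith [hy.1])
        · linarith [hy.1]
    _ ≤ 4 * a * (a - y) * r * (2 * r + s) := by
        nlinarith [mul_nonneg (mul_nonneg ha.le hay) (mul_nonneg hr.le hs0)]

theorem equilibrium_pos (hr : 1 / 2 < r) : 0 < equilibrium r :=
  sqrt_pos.2 (by nlinarith)

theorem zero_mem_Ioo_equilibrium (hr : 1 / 2 < r) :
    (0 : ℝ) ∈ Ioo (-equilibrium r) (equilibrium r) :=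
  ⟨neg_neg_of_pos (equilibrium_pos hr), equilibrium_pos hr⟩

theorem surjOn_travelTime_odeField (hr : 1 / 2 < r) :
    SurjOn (travelTime (odeField r)) (Ioo (-equilibrium r) (equilibrium r)) univ := by
  have hg := (continuous_odeField r).continuousOn (s := Ioo (-equilibrium r) (equilibrium r))
  have hpos := odeField_pos (by linarith : 0 < r)
  have h0 := zero_mem_Ioo_equilibrium hr
  have htop := not_bddAbove_travelTime hg hpos h0 (by linarith [equilibrium_pos hr])
    fun y hy => odeField_le (by linarith) hy
  exact surjOn_travelTime hg hpos h0 (not_bddBelow_travelTime_of_even (odeField_neg r) htop) htop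

end

theorem stmt11 (r : ℝ) (hr : 1 < r) :
    ∃ φ : ℝ → ℝ,
      (∀ x : ℝ,
        HasDerivAt φ (2 * (1 + (φ x) ^ 2) - (1 / r) * (1 + (φ x) ^ 2) ^ ((3 : ℝ) / 2)) x) ∧
      φ 0 = 0 ∧ (∀ x : ℝ, φ (-x) = -φ x) ∧ Monotone φ := by
  have hr' : 1 / 2 < r := by linarith
  have hg := (continuous_odeField r).continuousOn (s := Ioo (-equilibrium r) (equilibrium r))
  have hpos := odeField_pos (by linarith : 0 < r)
  have h0 := zero_mem_Ioo_equilibrium hr'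
  have hsurj := surjOn_travelTime_odeField hr'
  exact ⟨separableSolution (odeField r) (-equilibrium r) (equilibrium r),
    hasDerivAt_separableSolution hg hpos h0 hsurj, separableSolution_zero hg hpos h0,
    separableSolution_neg hg hpos h0 (odeField_neg r) hsurj,
    monotone_separableSolution hg hpos h0 hsurj⟩
end

section
/- Let φ be the global solution of φ' = 2(1+φ²) - (1/r)(1+φ²)^{3/2}, φ(0)=0, with r > 1. Then lim_{x→+∞} φ(x) = √(4r²-1). -/
/-!
A monotone function bounded above converges, to `L` say. Along the solution the derivative
`F(φ x)` then tends to `F L`, where `F` is the right-hand side of the equation, and a convergent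
function whose derivative has a limit must have derivative limit `0`. So `L` is a nonnegative
zero of `F`, and `F L = (1 + L²) (2 - √(1 + L²) / r)` vanishes only for `L² = 4r² - 1`.
-/

open Filter Topology Set

theorem eq_zero_of_tendsto_of_tendsto_deriv {f f' : ℝ → ℝ} {L c : ℝ}
    (hderiv : ∀ x, HasDerivAt f (f' x) x) (hf : Tendsto f atTop (𝓝 L))
    (hf' : Tendsto f' atTop (𝓝 c)) : c = 0 := by
  have hincr_zero : Tendsto (fun x => f (x + 1) - f x) atTop (𝓝 0) := by
    simpa using (hf.comp (tendsto_atTop_add_const_right _ 1 tendsto_id)).sub hf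
  -- by the mean value theorem, `f (x + 1) - f x` is a value of `f'` beyond `x`
  have hincr_c : Tendsto (fun x => f (x + 1) - f x) atTop (𝓝 c) := by
    intro U hU
    obtain ⟨x₀, hx₀⟩ := eventually_atTop.mp (hf' hU)
    refine eventually_atTop.mpr ⟨x₀, fun x hx => ?_⟩
    obtain ⟨ξ, hξ, hslope⟩ := exists_hasDerivAt_eq_slope f f' (lt_add_one x)
      (fun y _ => (hderiv y).continuousAt.continuousWithinAt) fun y _ => hderiv y
    rw [add_sub_cancel_left, div_one] at hslope
    simpa only [mem_preimage, ← hslope] using hx₀ ξ (hx.trans hξ.1.le)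
  exact tendsto_nhds_unique hincr_c hincr_zero

theorem Real.rpow_three_halves_eq_mul_sqrt {a : ℝ} (ha : 0 ≤ a) :
    a ^ ((3 : ℝ) / 2) = a * √a := by
  rw [Real.sqrt_eq_rpow, ← Real.rpow_one_add' ha (by norm_num)]
  norm_num

noncomputable def odeRHS (r y : ℝ) : ℝ :=
  2 * (1 + y ^ 2) - 1 / r * (1 + y ^ 2) ^ ((3 : ℝ) / 2)

theorem continuous_odeRHS (r : ℝ) : Continuous (odeRHS r) := by
  have := Real.continuous_rpow_const (q := (3 : ℝ) / 2) (by norm_num)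
  unfold odeRHS
  fun_prop

theorem eq_sqrt_of_odeRHS_eq_zero {r L : ℝ} (hL : 0 ≤ L) (h : odeRHS r L = 0) :
    L = √(4 * r ^ 2 - 1) := by
  have hpos : 0 < 1 + L ^ 2 := by positivity
  have hr : r ≠ 0 := by
    rintro rfl
    simp only [odeRHS, div_zero, zero_mul, sub_zero] at h
    linarith
  have hsqrt : √(1 + L ^ 2) = 2 * r := by
    rw [odeRHS, Real.rpow_three_halves_eq_mul_sqrt hpos.le] at h
    field_simp at h
    nlinarith
  have hsq : L ^ 2 = 4 * r ^ 2 - 1 := by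
    have := Real.sq_sqrt hpos.le
    rw [hsqrt] at this
    linarith
  rw [← hsq, Real.sqrt_sq hL]

theorem stmt12_general (r : ℝ) (φ : ℝ → ℝ)
    (hode : ∀ x : ℝ,
      HasDerivAt φ (2 * (1 + (φ x) ^ 2) - (1 / r) * (1 + (φ x) ^ 2) ^ ((3 : ℝ) / 2)) x)
    (hinit : φ 0 = 0) (hmono : Monotone φ)
    (hbound : ∀ x : ℝ, φ x ≤ Real.sqrt (4 * r ^ 2 - 1)) :
    Tendsto φ atTop (𝓝 (Real.sqrt (4 * r ^ 2 - 1))) := by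
  have hbdd : BddAbove (range φ) := ⟨_, forall_mem_range.mpr hbound⟩
  have hlim : Tendsto φ atTop (𝓝 (⨆ x, φ x)) := tendsto_atTop_ciSup hmono hbdd
  have hlim_nonneg : 0 ≤ ⨆ x, φ x := hinit ▸ le_ciSup hbdd 0
  have hrhs_zero : odeRHS r (⨆ x, φ x) = 0 :=
    eq_zero_of_tendsto_of_tendsto_deriv (f' := fun x => odeRHS r (φ x)) hode hlim
      ((continuous_odeRHS r).tendsto _ |>.comp hlim)
  rwa [← eq_sqrt_of_odeRHS_eq_zero hlim_nonneg hrhs_zero]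

theorem stmt12 (r : ℝ) (hr : 1 < r) (φ : ℝ → ℝ)
    (hode : ∀ x : ℝ,
      HasDerivAt φ (2 * (1 + (φ x) ^ 2) - (1 / r) * (1 + (φ x) ^ 2) ^ ((3 : ℝ) / 2)) x)
    (hinit : φ 0 = 0) (hmono : Monotone φ)
    (hbound : ∀ x : ℝ, φ x ≤ Real.sqrt (4 * r ^ 2 - 1)) :
    Tendsto φ atTop (𝓝 (Real.sqrt (4 * r ^ 2 - 1))) :=
  stmt12_general r φ hode hinit hmono hbound
end
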